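/- arXiv:2312.01341 — 2 statements merged into one kernel-verified Lean document; each statement's English description precedes it below -/
import Mathlib

section
/- Let u : ℝ² → ℝ² be a continuously differentiable, compactly supported (autonomous) vector field, and let Φ : ℝ × ℝ² → ℝ² be its flow, i.e., Φ(0,x) = x and ∂Φ/∂s(s,x) = u(Φ(s,x)) for all s and x. Let S₁, S₂ : ℝ² → ℝ be continuously differentiable with compact support. Then the function s ↦ ∫_{ℝ²} (S₁(x) − S₂(Φ(−s,x)))² dx is differentiable at s = 0 and its derivative at s = 0 equals ∫_{ℝ²} 2 (S₁(x) − S₂(x)) · (u(x)·∇S₂(x)) dx. -/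
/-! Differentiate under the integral sign. By the chain rule, `s ↦ (S₁ x - S₂ (Φ (-s) x))²` has
derivative `2 (S₁ x - S₂ y) · dS₂(y)(u y)` with `y = Φ (-s) x`. This vanishes unless `y` lies in
the support of `L_u S₂ = dS₂(·)(u ·)`; since the flow moves points with speed at most `sup ‖u‖`,
for `|s| < 1` the point `x` then lies in a fixed compact thickening of that support, so a constant
times an indicator dominates. Measurability of the integrands comes from the continuity of `Φ s`,
which Grönwall's inequality gives because `u` is Lipschitz. -/

open MeasureTheory

/-- Partial derivative in the first coordinate direction of a scalar field on `ℝ²`. -/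
noncomputable def pd1 (f : ℝ × ℝ → ℝ) (x : ℝ × ℝ) : ℝ := fderiv ℝ f x (1, 0)

/-- Partial derivative in the second coordinate direction of a scalar field on `ℝ²`. -/
noncomputable def pd2 (f : ℝ × ℝ → ℝ) (x : ℝ × ℝ) : ℝ := fderiv ℝ f x (0, 1)

open Metric Set

section Flow

variable {E : Type*} [NormedAddCommGroup E] [NormedSpace ℝ E] {v : E → E} {Φ : ℝ → E → E}

theorem hasDerivAt_flow_neg (hΦ : ∀ s x, HasDerivAt (fun σ => Φ σ x) (v (Φ s x)) s)
    (s : ℝ) (x : E) : HasDerivAt (fun σ => Φ (-σ) x) (-v (Φ (-s) x)) s := by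
  simpa [Function.comp_def] using (hΦ (-s) x).scomp s (hasDerivAt_neg s)

theorem dist_flow_le_of_nonneg {K : NNReal} (hv : LipschitzWith K v) (hΦ0 : ∀ x, Φ 0 x = x)
    (hΦ : ∀ s x, HasDerivAt (fun σ => Φ σ x) (v (Φ s x)) s) {s : ℝ} (hs : 0 ≤ s) (x y : E) :
    dist (Φ s x) (Φ s y) ≤ dist x y * Real.exp (K * s) := by
  have hcont : ∀ x, Continuous fun σ => Φ σ x := fun x =>
    continuous_iff_continuousAt.2 fun σ => (hΦ σ x).continuousAt
  simpa using dist_le_of_trajectories_ODE (v := fun _ => v) (fun _ => hv)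
    (hcont x).continuousOn (fun σ _ => (hΦ σ x).hasDerivWithinAt)
    (hcont y).continuousOn (fun σ _ => (hΦ σ y).hasDerivWithinAt)
    (by rw [hΦ0, hΦ0]) s ⟨hs, le_rfl⟩

theorem dist_flow_le {K : NNReal} (hv : LipschitzWith K v) (hΦ0 : ∀ x, Φ 0 x = x)
    (hΦ : ∀ s x, HasDerivAt (fun σ => Φ σ x) (v (Φ s x)) s) (s : ℝ) (x y : E) :
    dist (Φ s x) (Φ s y) ≤ dist x y * Real.exp (K * |s|) := by
  rcases le_or_gt 0 s with hs | hs
  · simpa [abs_of_nonneg hs] using dist_flow_le_of_nonneg hv hΦ0 hΦ hs x y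
  · simpa [abs_of_neg hs] using dist_flow_le_of_nonneg (Φ := fun σ => Φ (-σ)) hv.neg
      (by simpa using hΦ0) (hasDerivAt_flow_neg hΦ) (neg_nonneg.2 hs.le) x y

theorem continuous_flow {K : NNReal} (hv : LipschitzWith K v) (hΦ0 : ∀ x, Φ 0 x = x)
    (hΦ : ∀ s x, HasDerivAt (fun σ => Φ σ x) (v (Φ s x)) s) (s : ℝ) : Continuous (Φ s) :=
  (LipschitzWith.of_dist_le_mul (K := (Real.exp (K * |s|)).toNNReal) fun x y => by
    rw [Real.coe_toNNReal _ (Real.exp_pos _).le, mul_comm]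
    exact dist_flow_le hv hΦ0 hΦ s x y).continuous

theorem norm_flow_sub_le {M : ℝ} (hvM : ∀ y, ‖v y‖ ≤ M) (hΦ0 : ∀ x, Φ 0 x = x)
    (hΦ : ∀ s x, HasDerivAt (fun σ => Φ σ x) (v (Φ s x)) s) (s : ℝ) (x : E) :
    ‖Φ s x - x‖ ≤ M * |s| := by
  simpa [hΦ0, Real.norm_eq_abs] using
    Convex.norm_image_sub_le_of_norm_hasDerivWithin_le (f := fun σ => Φ σ x)
      (fun σ _ => (hΦ σ x).hasDerivWithinAt) (fun σ _ => hvM _) convex_univ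
      (mem_univ 0) (mem_univ s)

theorem mem_cthickening_of_flow_mem {M : ℝ} (hvM : ∀ y, ‖v y‖ ≤ M) (hΦ0 : ∀ x, Φ 0 x = x)
    (hΦ : ∀ s x, HasDerivAt (fun σ => Φ σ x) (v (Φ s x)) s) {A : Set E} {s : ℝ} (hs : |s| ≤ 1)
    {x : E} (hx : Φ s x ∈ A) : x ∈ cthickening M A := by
  refine mem_cthickening_of_dist_le x (Φ s x) M A hx ?_
  calc dist x (Φ s x) = ‖Φ s x - x‖ := by rw [dist_comm, dist_eq_norm]
    _ ≤ M * |s| := norm_flow_sub_le hvM hΦ0 hΦ s x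
    _ ≤ M := mul_le_of_le_one_right ((norm_nonneg _).trans (hvM 0)) hs

theorem hasDerivAt_sq_sub_comp_flow_neg (hΦ : ∀ s x, HasDerivAt (fun σ => Φ σ x) (v (Φ s x)) s)
    {S : E → ℝ} (hS : Differentiable ℝ S) (a : ℝ) (x : E) (s : ℝ) :
    HasDerivAt (fun σ => (a - S (Φ (-σ) x)) ^ 2)
      (2 * (a - S (Φ (-s) x)) * fderiv ℝ S (Φ (-s) x) (v (Φ (-s) x))) s := by
  have h := ((hasDerivAt_const s a).sub
    ((hS _).hasFDerivAt.comp_hasDerivAt s (hasDerivAt_flow_neg hΦ s x))).pow 2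
  refine h.congr_deriv ?_
  simp only [map_neg, Pi.sub_apply, Function.comp_apply]
  ring

theorem norm_residual_deriv_le_indicator {M B₁ B₂ B : ℝ} (hvM : ∀ y, ‖v y‖ ≤ M)
    (hΦ0 : ∀ x, Φ 0 x = x) (hΦ : ∀ s x, HasDerivAt (fun σ => Φ σ x) (v (Φ s x)) s)
    {S₁ S₂ D : E → ℝ} (hB₁ : ∀ x, ‖S₁ x‖ ≤ B₁) (hB₂ : ∀ x, ‖S₂ x‖ ≤ B₂) (hB : ∀ x, ‖D x‖ ≤ B)
    {s : ℝ} (hs : |s| ≤ 1) (x : E) :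
    ‖2 * (S₁ x - S₂ (Φ s x)) * D (Φ s x)‖ ≤
      (cthickening M (tsupport D)).indicator (fun _ => 2 * (B₁ + B₂) * B) x := by
  have := (norm_nonneg _).trans (hB₁ 0)
  have := (norm_nonneg _).trans (hB₂ 0)
  by_cases h : D (Φ s x) = 0
  · have := (norm_nonneg _).trans (hB 0)
    simpa [h] using indicator_nonneg (fun _ _ => by positivity) x
  rw [indicator_of_mem (mem_cthickening_of_flow_mem hvM hΦ0 hΦ hs (subset_tsupport _ h))]
  calc ‖2 * (S₁ x - S₂ (Φ s x)) * D (Φ s x)‖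
      = 2 * ‖S₁ x - S₂ (Φ s x)‖ * ‖D (Φ s x)‖ := by simp [norm_mul]
    _ ≤ 2 * (B₁ + B₂) * B := by
      gcongr
      · exact (norm_sub_le _ _).trans (add_le_add (hB₁ x) (hB₂ _))
      · exact hB _

theorem hasDerivAt_integral_sq_sub_comp_flow_neg [MeasurableSpace E] [BorelSpace E]
    [ProperSpace E] {μ : Measure E} [IsFiniteMeasureOnCompacts μ] {K : NNReal}
    (hv : LipschitzWith K v) (hv_supp : HasCompactSupport v) (hΦ0 : ∀ x, Φ 0 x = x)
    (hΦ : ∀ s x, HasDerivAt (fun σ => Φ σ x) (v (Φ s x)) s) {S₁ S₂ : E → ℝ}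
    (hS₁ : Continuous S₁) (hS₂ : ContDiff ℝ 1 S₂) (hS₁_supp : HasCompactSupport S₁)
    (hS₂_supp : HasCompactSupport S₂) :
    HasDerivAt (fun s => ∫ x, (S₁ x - S₂ (Φ (-s) x)) ^ 2 ∂μ)
      (∫ x, 2 * (S₁ x - S₂ x) * fderiv ℝ S₂ x (v x) ∂μ) 0 := by
  set D : E → ℝ := fun y => fderiv ℝ S₂ y (v y)
  have hD : Continuous D := (hS₂.continuous_fderiv one_ne_zero).clm_apply hv.continuous
  have hD_supp : HasCompactSupport D := hv_supp.mono fun y hy h => hy (by simp [D, h])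
  obtain ⟨M, hM⟩ := hv_supp.exists_bound_of_continuous hv.continuous
  obtain ⟨B₁, hB₁⟩ := hS₁_supp.exists_bound_of_continuous hS₁
  obtain ⟨B₂, hB₂⟩ := hS₂_supp.exists_bound_of_continuous hS₂.continuous
  obtain ⟨B, hB⟩ := hD_supp.exists_bound_of_continuous hD
  have hT : IsCompact (cthickening M (tsupport D)) := IsCompact.cthickening hD_supp
  have h_int : Integrable (fun x => (S₁ x - S₂ (Φ (-0) x)) ^ 2) μ := by
    have h_supp : HasCompactSupport fun x => (S₁ x - S₂ x) ^ 2 :=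
      (hS₁_supp.sub hS₂_supp).comp_left (g := fun t : ℝ => t ^ 2) (zero_pow two_ne_zero)
    simp only [neg_zero, hΦ0]
    exact ((hS₁.sub hS₂.continuous).pow 2).integrable_of_hasCompactSupport h_supp
  have h_meas : AEStronglyMeasurable (fun x => 2 * (S₁ x - S₂ (Φ (-0) x)) * D (Φ (-0) x)) μ := by
    simp only [neg_zero, hΦ0]
    exact ((continuous_const.mul (hS₁.sub hS₂.continuous)).mul hD).aestronglyMeasurable
  have h := hasDerivAt_integral_of_dominated_loc_of_deriv_le (μ := μ)
    (F := fun s x => (S₁ x - S₂ (Φ (-s) x)) ^ 2) (ball_mem_nhds 0 one_pos)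
    (.of_forall fun s =>
      ((hS₁.sub (hS₂.continuous.comp (continuous_flow hv hΦ0 hΦ (-s)))).pow 2).aestronglyMeasurable)
    h_int h_meas
    (.of_forall fun x s hs => norm_residual_deriv_le_indicator hM hΦ0 hΦ hB₁ hB₂ hB
      (by simpa [abs_neg] using (mem_ball_zero_iff.1 hs).le) x)
    ((integrable_indicator_iff hT.measurableSet).2 (integrableOn_const hT.measure_lt_top.ne))
    (.of_forall fun x s _ =>
      hasDerivAt_sq_sub_comp_flow_neg hΦ (hS₂.differentiable one_ne_zero) _ x s)
  simpa only [neg_zero, hΦ0] using h.2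

end Flow

theorem fderiv_apply_eq_pd1_add_pd2 (f : ℝ × ℝ → ℝ) (x w : ℝ × ℝ) :
    fderiv ℝ f x w = w.1 * pd1 f x + w.2 * pd2 f x := by
  have hw : w = w.1 • ((1 : ℝ), (0 : ℝ)) + w.2 • ((0 : ℝ), (1 : ℝ)) := by simp
  conv_lhs => rw [hw]
  simp only [map_add, map_smul, smul_eq_mul, pd1, pd2]

/-- **First-order expansion of the residual along the flow (0-form case).**
Let `u` be a `C¹`, compactly supported autonomous vector field on `ℝ²` with flow
`Φ` (`Φ 0 x = x`, `∂Φ/∂s (s,x) = u (Φ s x)`), and let `S₁, S₂` be `C¹` compactly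
supported scalar fields.  Then `s ↦ ∫ (S₁(x) − S₂(Φ(−s,x)))² dx` is
differentiable at `s = 0` with derivative
`∫ 2 (S₁(x) − S₂(x)) (u(x)·∇S₂(x)) dx`. -/
theorem residual_derivative_along_flow_zero_form
    (u : ℝ × ℝ → ℝ × ℝ) (hu : ContDiff ℝ 1 u) (husupp : HasCompactSupport u)
    (Φ : ℝ → ℝ × ℝ → ℝ × ℝ)
    (hΦ0 : ∀ x, Φ 0 x = x)
    (hΦ : ∀ s x, HasDerivAt (fun σ => Φ σ x) (u (Φ s x)) s)
    (S₁ S₂ : ℝ × ℝ → ℝ)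
    (hS₁ : ContDiff ℝ 1 S₁) (hS₂ : ContDiff ℝ 1 S₂)
    (hS₁supp : HasCompactSupport S₁) (hS₂supp : HasCompactSupport S₂) :
    HasDerivAt (fun s : ℝ => ∫ x : ℝ × ℝ, (S₁ x - S₂ (Φ (-s) x)) ^ 2)
      (∫ x : ℝ × ℝ, 2 * (S₁ x - S₂ x) * ((u x).1 * pd1 S₂ x + (u x).2 * pd2 S₂ x))
      0 := by
  obtain ⟨K, hK⟩ := hu.lipschitzWith_of_hasCompactSupport husupp one_ne_zero
  simpa only [fderiv_apply_eq_pd1_add_pd2] using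
    hasDerivAt_integral_sq_sub_comp_flow_neg (μ := volume) hK husupp hΦ0 hΦ hS₁.continuous hS₂
      hS₁supp hS₂supp
end

section
/- Let u : ℝ² → ℝ² be a continuously differentiable, compactly supported (autonomous) vector field, and let Φ : ℝ × ℝ² → ℝ² be its flow (Φ(0,x) = x, ∂Φ/∂s(s,x) = u(Φ(s,x))). Assume each Φ(s,·) is continuously differentiable with spatial derivative D_xΦ(s,x) continuous in (s,x) and differentiable in s with ∂_s D_xΦ(s,x) = Du(Φ(s,x)) ∘ D_xΦ(s,x). Let h₁, h₂ : ℝ² → ℝ be continuously differentiable with compact support. Then the function s ↦ ∫_{ℝ²} (h₁(x) − h₂(Φ(−s,x))·det(D_xΦ(−s,x)))² dx is differentiable at s = 0 with derivative ∫_{ℝ²} 2 (h₁(x) − h₂(x)) · div(h₂ u)(x) dx, where div(h₂u) = ∂(h₂u₁)/∂x₁ + ∂(h₂u₂)/∂x₂. -/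
open MeasureTheory

/-!
Off `tsupport u` the flow is stationary, so all integrands are supported in one compact set and,
their `s`-derivatives being jointly continuous, differentiation under the integral sign is
legitimate. By Jacobi's formula `∂ₛ det DΦ = tr (Du ∘ Φ) · det DΦ`, the transported density
`s ↦ h₂ (Φ (-s) x) · det DΦ (-s) x` has `s`-derivative
`-div (h₂ u) (Φ (-s) x) · det DΦ (-s) x`, which is `-div (h₂ u) x` at `s = 0`.
-/

open Set Filter Topology

theorem hasDerivAt_integral_of_continuous_of_compact
    {X E : Type*} [TopologicalSpace X] [T2Space X] [MeasurableSpace X] [OpensMeasurableSpace X]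
    [NormedAddCommGroup E] [NormedSpace ℝ E] [SecondCountableTopologyEither X E]
    {μ : Measure X} [IsFiniteMeasureOnCompacts μ] {F F' : ℝ → X → E} {K : Set X} {s₀ : ℝ}
    (hK : IsCompact K) (hF : ∀ s, Continuous (F s)) (hF₀ : HasCompactSupport (F s₀))
    (hF' : Continuous (Function.uncurry F')) (hF'K : ∀ s, ∀ x ∉ K, F' s x = 0)
    (hderiv : ∀ s x, HasDerivAt (F · x) (F' s x) s) :
    HasDerivAt (fun s => ∫ x, F s x ∂μ) (∫ x, F' s₀ x ∂μ) s₀ := by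
  obtain ⟨C, hC⟩ := ((isCompact_closedBall s₀ 1).prod hK).exists_bound_of_continuousOn
    hF'.continuousOn
  refine (hasDerivAt_integral_of_dominated_loc_of_deriv_le (bound := K.indicator fun _ => C)
    (Metric.closedBall_mem_nhds s₀ one_pos) (.of_forall fun s => (hF s).aestronglyMeasurable)
    ((hF s₀).integrable_of_hasCompactSupport hF₀)
    (hF'.comp (Continuous.prodMk_right s₀)).aestronglyMeasurable ?_ ?_
    (.of_forall fun x s _ => hderiv s x)).2
  · refine .of_forall fun x s hs => ?_
    by_cases hx : x ∈ K
    · simpa [hx] using hC (s, x) ⟨hs, hx⟩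
    · simp [hx, hF'K s x hx]
  · exact (integrable_indicator_iff hK.measurableSet).2 (integrableOn_const hK.measure_lt_top.ne)

section Flow

variable {E : Type*} [NormedAddCommGroup E] [NormedSpace ℝ E] {u : E → E} {Φ : ℝ → E → E}

theorem flow_eq_self_of_apply_eq_zero {L : NNReal} (hu : LipschitzWith L u)
    (hΦ0 : ∀ x, Φ 0 x = x) (hΦ : ∀ s x, HasDerivAt (Φ · x) (u (Φ s x)) s) {x : E}
    (hx : u x = 0) (s : ℝ) : Φ s x = x :=
  congrFun (ODE_solution_unique_univ (v := fun _ => u) (s := fun _ => univ) (t₀ := 0)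
    (g := fun _ => x) (fun _ => hu.lipschitzOnWith) (fun t => ⟨hΦ t x, trivial⟩)
    (fun t => ⟨by simpa [hx] using hasDerivAt_const t x, trivial⟩) (hΦ0 x)) s

theorem continuous_uncurry_flow {C : ℝ} (hu : ∀ x, ‖u x‖ ≤ C)
    (hΦ : ∀ s x, HasDerivAt (Φ · x) (u (Φ s x)) s) (hΦc : ∀ s, Continuous (Φ s)) :
    Continuous (Function.uncurry Φ) :=
  continuous_prod_of_continuous_lipschitzWith _ C.toNNReal hΦc fun x =>
    lipschitzWith_of_nnnorm_deriv_le (fun s => (hΦ s x).differentiableAt) fun s => by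
      simpa [(hΦ s x).deriv, ← NNReal.coe_le_coe] using
        (hu (Φ s x)).trans (Real.le_coe_toNNReal C)

end Flow

theorem ContinuousLinearMap.apply_eq_fst_smul_add_snd_smul {M : Type*} [AddCommGroup M]
    [Module ℝ M] [TopologicalSpace M] (f : ℝ × ℝ →L[ℝ] M) (v : ℝ × ℝ) :
    f v = v.1 • f (1, 0) + v.2 • f (0, 1) := by
  rw [← map_smul, ← map_smul, ← map_add]
  congr 1
  ext <;> simp

theorem ContinuousLinearMap.det_prod_real (A : ℝ × ℝ →L[ℝ] ℝ × ℝ) :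
    A.det = (A (1, 0)).1 * (A (0, 1)).2 - (A (1, 0)).2 * (A (0, 1)).1 := by
  rw [ContinuousLinearMap.det, ← LinearMap.det_toMatrix (Module.Basis.finTwoProd ℝ),
    Matrix.det_fin_two]
  simp [LinearMap.toMatrix_apply]
  ring

theorem ContinuousLinearMap.trace_prod_real (A : ℝ × ℝ →L[ℝ] ℝ × ℝ) :
    LinearMap.trace ℝ (ℝ × ℝ) A = (A (1, 0)).1 + (A (0, 1)).2 := by
  rw [LinearMap.trace_eq_matrix_trace ℝ (Module.Basis.finTwoProd ℝ), Matrix.trace_fin_two]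
  simp [LinearMap.toMatrix_apply]

theorem HasDerivAt.det_prod_real {J : ℝ → ℝ × ℝ →L[ℝ] ℝ × ℝ} {A : ℝ × ℝ →L[ℝ] ℝ × ℝ} {σ : ℝ}
    (hJ : HasDerivAt J (A ∘L J σ) σ) :
    HasDerivAt (fun τ => (J τ).det) (LinearMap.trace ℝ (ℝ × ℝ) A * (J σ).det) σ := by
  have hcol (v : ℝ × ℝ) : HasDerivAt (fun τ => J τ v) (A (J σ v)) σ := by
    simpa using hJ.clm_apply (hasDerivAt_const σ v)
  have hfst (v : ℝ × ℝ) : HasDerivAt (fun τ => (J τ v).1) (A (J σ v)).1 σ :=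
    (ContinuousLinearMap.fst ℝ ℝ ℝ).hasFDerivAt.comp_hasDerivAt σ (hcol v)
  have hsnd (v : ℝ × ℝ) : HasDerivAt (fun τ => (J τ v).2) (A (J σ v)).2 σ :=
    (ContinuousLinearMap.snd ℝ ℝ ℝ).hasFDerivAt.comp_hasDerivAt σ (hcol v)
  simp only [ContinuousLinearMap.det_prod_real]
  refine (((hfst (1, 0)).mul (hsnd (0, 1))).sub ((hsnd (1, 0)).mul (hfst (0, 1)))).congr_deriv ?_
  rw [ContinuousLinearMap.trace_prod_real, A.apply_eq_fst_smul_add_snd_smul (J σ (1, 0)),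
    A.apply_eq_fst_smul_add_snd_smul (J σ (0, 1))]
  simp only [Prod.fst_add, Prod.snd_add, Prod.smul_fst, Prod.smul_snd, smul_eq_mul]
  ring

noncomputable def divergence (v : ℝ × ℝ → ℝ × ℝ) (x : ℝ × ℝ) : ℝ :=
  pd1 (fun y => (v y).1) x + pd2 (fun y => (v y).2) x

section Divergence

variable {v : ℝ × ℝ → ℝ × ℝ} {x : ℝ × ℝ}

theorem divergence_eq_trace (hv : DifferentiableAt ℝ v x) :
    divergence v x = LinearMap.trace ℝ (ℝ × ℝ) (fderiv ℝ v x) := by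
  rw [divergence, pd1, pd2, hv.hasFDerivAt.fst.fderiv, hv.hasFDerivAt.snd.fderiv,
    ContinuousLinearMap.trace_prod_real]
  rfl

theorem divergence_smul {h : ℝ × ℝ → ℝ} (hh : DifferentiableAt ℝ h x)
    (hv : DifferentiableAt ℝ v x) :
    divergence (fun y => h y • v y) x = fderiv ℝ h x (v x) + h x * divergence v x := by
  rw [divergence_eq_trace (v := fun y => h y • v y) (hh.smul hv), divergence_eq_trace hv,
    fderiv_fun_smul hh hv, ContinuousLinearMap.trace_prod_real,
    ContinuousLinearMap.trace_prod_real, (fderiv ℝ h x).apply_eq_fst_smul_add_snd_smul]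
  simp only [add_apply, smul_apply, ContinuousLinearMap.smulRight_apply, Prod.fst_add,
    Prod.snd_add, Prod.smul_fst, Prod.smul_snd, smul_eq_mul]
  ring

theorem continuous_divergence (hv : ContDiff ℝ 1 v) : Continuous (divergence v) := by
  have hc (f : ℝ × ℝ → ℝ) (hf : ContDiff ℝ 1 f) (w : ℝ × ℝ) :
      Continuous fun y => fderiv ℝ f y w :=
    (hf.continuous_fderiv one_ne_zero).clm_apply continuous_const
  exact (hc _ hv.fst (1, 0)).add (hc _ hv.snd (0, 1))

theorem divergence_eq_zero_of_notMem_tsupport (hx : x ∉ tsupport v) : divergence v x = 0 := by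
  have hfst : x ∉ tsupport fun y => (v y).1 := fun h => hx (tsupport_comp_subset rfl _ h)
  have hsnd : x ∉ tsupport fun y => (v y).2 := fun h => hx (tsupport_comp_subset rfl _ h)
  simp [divergence, pd1, pd2, fderiv_of_notMem_tsupport ℝ hfst, fderiv_of_notMem_tsupport ℝ hsnd]

end Divergence

/-- When `Φ (-s) = (Φ s)⁻¹`, this is the density of the push-forward `(Φ s)_* (g dx)`. -/
noncomputable def pushforwardDensity (Φ : ℝ → ℝ × ℝ → ℝ × ℝ)
    (DΦ : ℝ → ℝ × ℝ → (ℝ × ℝ →L[ℝ] ℝ × ℝ)) (g : ℝ × ℝ → ℝ) (s : ℝ) (x : ℝ × ℝ) : ℝ :=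
  g (Φ (-s) x) * (DΦ (-s) x).det

section PushforwardDensity

variable {Φ : ℝ → ℝ × ℝ → ℝ × ℝ} {DΦ : ℝ → ℝ × ℝ → (ℝ × ℝ →L[ℝ] ℝ × ℝ)} {g : ℝ × ℝ → ℝ}

theorem continuous_pushforwardDensity (hg : Continuous g) (hΦ : Continuous (Function.uncurry Φ))
    (hDΦ : Continuous (Function.uncurry DΦ)) :
    Continuous (Function.uncurry (pushforwardDensity Φ DΦ g)) := by
  have hneg : Continuous fun p : ℝ × (ℝ × ℝ) => (-p.1, p.2) := by fun_prop
  exact (hg.comp (hΦ.comp hneg)).mul (ContinuousLinearMap.continuous_det.comp (hDΦ.comp hneg))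

theorem pushforwardDensity_zero (hΦ0 : ∀ x, Φ 0 x = x)
    (hDΦ0 : ∀ x, DΦ 0 x = ContinuousLinearMap.id ℝ (ℝ × ℝ)) (x : ℝ × ℝ) :
    pushforwardDensity Φ DΦ g 0 x = g x := by
  simp [pushforwardDensity, hΦ0, hDΦ0, ContinuousLinearMap.det]

theorem pushforwardDensity_eq_zero_of_notMem_tsupport {u : ℝ × ℝ → ℝ × ℝ} {L : NNReal}
    (hu : LipschitzWith L u) (hΦ0 : ∀ x, Φ 0 x = x)
    (hΦ : ∀ s x, HasDerivAt (Φ · x) (u (Φ s x)) s) (hg : ∀ x ∉ tsupport u, g x = 0) (s : ℝ)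
    {x : ℝ × ℝ} (hx : x ∉ tsupport u) : pushforwardDensity Φ DΦ g s x = 0 := by
  rw [pushforwardDensity,
    flow_eq_self_of_apply_eq_zero hu hΦ0 hΦ (image_eq_zero_of_notMem_tsupport hx), hg x hx,
    zero_mul]

theorem hasDerivAt_pushforwardDensity {u : ℝ × ℝ → ℝ × ℝ} (hu : Differentiable ℝ u)
    (hg : Differentiable ℝ g) (hΦ : ∀ s x, HasDerivAt (Φ · x) (u (Φ s x)) s)
    (hDΦs : ∀ s x, HasDerivAt (DΦ · x) ((fderiv ℝ u (Φ s x)).comp (DΦ s x)) s)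
    (s : ℝ) (x : ℝ × ℝ) :
    HasDerivAt (pushforwardDensity Φ DΦ g · x)
      (-pushforwardDensity Φ DΦ (divergence fun y => g y • u y) s x) s := by
  have hγ : HasDerivAt (fun σ => Φ (-σ) x) (-u (Φ (-s) x)) s :=
    ((hΦ (-s) x).scomp s (hasDerivAt_neg s)).congr_deriv (neg_one_smul ℝ _)
  have hJ : HasDerivAt (fun σ => DΦ (-σ) x) ((-fderiv ℝ u (Φ (-s) x)) ∘L DΦ (-s) x) s :=
    ((hDΦs (-s) x).scomp s (hasDerivAt_neg s)).congr_deriv (by simp)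
  refine (((hg _).hasFDerivAt.comp_hasDerivAt s hγ).mul hJ.det_prod_real).congr_deriv ?_
  rw [pushforwardDensity, divergence_smul (hg _) (hu _), divergence_eq_trace (hu _)]
  simp only [ContinuousLinearMap.toLinearMap_neg, map_neg, Function.comp_apply]
  ring

end PushforwardDensity

/-- **First-order expansion of the residual along the flow (2-form / density case).**
Let `u` be a `C¹`, compactly supported autonomous vector field on `ℝ²` with flow
`Φ` (`Φ 0 x = x`, `∂Φ/∂s (s,x) = u (Φ s x)`), whose spatial derivative `DΦ`
depends continuously on `(s,x)` and satisfies the variational equation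
`∂ₛ DΦ(s,x) = Du(Φ(s,x)) ∘ DΦ(s,x)`.  Let `h₁, h₂` be `C¹` compactly supported
scalar fields.  Then `s ↦ ∫ (h₁(x) − h₂(Φ(−s,x))·det(DΦ(−s,x)))² dx` is
differentiable at `s = 0` with derivative
`∫ 2 (h₁(x) − h₂(x)) div(h₂ u)(x) dx`. -/
theorem residual_derivative_along_flow_density
    (u : ℝ × ℝ → ℝ × ℝ) (hu : ContDiff ℝ 1 u) (husupp : HasCompactSupport u)
    (Φ : ℝ → ℝ × ℝ → ℝ × ℝ)
    (hΦ0 : ∀ x, Φ 0 x = x)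
    (hΦ : ∀ s x, HasDerivAt (fun σ => Φ σ x) (u (Φ s x)) s)
    (DΦ : ℝ → ℝ × ℝ → (ℝ × ℝ →L[ℝ] ℝ × ℝ))
    (hDΦ : ∀ s x, HasFDerivAt (Φ s) (DΦ s x) x)
    (hDΦcont : Continuous fun p : ℝ × (ℝ × ℝ) => DΦ p.1 p.2)
    (hDΦs : ∀ s x, HasDerivAt (fun σ => DΦ σ x)
        ((fderiv ℝ u (Φ s x)).comp (DΦ s x)) s)
    (h₁ h₂ : ℝ × ℝ → ℝ)
    (hh₁ : ContDiff ℝ 1 h₁) (hh₂ : ContDiff ℝ 1 h₂)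
    (hh₁supp : HasCompactSupport h₁) (hh₂supp : HasCompactSupport h₂) :
    HasDerivAt
      (fun s : ℝ => ∫ x : ℝ × ℝ, (h₁ x - h₂ (Φ (-s) x) * (DΦ (-s) x).det) ^ 2)
      (∫ x : ℝ × ℝ, 2 * (h₁ x - h₂ x) *
        (pd1 (fun y => h₂ y * (u y).1) x + pd2 (fun y => h₂ y * (u y).2) x))
      0 := by
  obtain ⟨L, hL⟩ := hu.lipschitzWith_of_hasCompactSupport husupp one_ne_zero
  obtain ⟨C, hC⟩ := husupp.exists_bound_of_continuous hu.continuous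
  have hΦcont := continuous_uncurry_flow hC hΦ fun s =>
    continuous_iff_continuousAt.2 fun x => (hDΦ s x).continuousAt
  have hDΦ0 (x : ℝ × ℝ) : DΦ 0 x = ContinuousLinearMap.id ℝ (ℝ × ℝ) :=
    ((funext hΦ0 : Φ 0 = id) ▸ hDΦ 0 x).unique (hasFDerivAt_id x)
  set P := pushforwardDensity Φ DΦ
  set divh₂u := divergence fun y => h₂ y • u y
  have hP₂ := continuous_pushforwardDensity hh₂.continuous hΦcont hDΦcont
  have hPdiv := continuous_pushforwardDensity (continuous_divergence (hh₂.smul hu)) hΦcont hDΦcont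
  have hF₀ : (fun x => (h₁ x - P h₂ 0 x) ^ 2) = fun x => (h₁ x - h₂ x) ^ 2 := by
    simp only [P, pushforwardDensity_zero hΦ0 hDΦ0]
  have hPdiv_supp (s : ℝ) (x : ℝ × ℝ) (hx : x ∉ tsupport u) : P divh₂u s x = 0 :=
    pushforwardDensity_eq_zero_of_notMem_tsupport hL hΦ0 hΦ
      (fun y hy => divergence_eq_zero_of_notMem_tsupport
        fun h => hy (tsupport_smul_subset_right _ _ h)) s hx
  have hmain := hasDerivAt_integral_of_continuous_of_compact (μ := volume) (s₀ := 0)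
    (F := fun s x => (h₁ x - P h₂ s x) ^ 2) (F' := fun s x => 2 * (h₁ x - P h₂ s x) * P divh₂u s x)
    husupp (fun s => (hh₁.continuous.sub (hP₂.uncurry_left s)).pow 2)
    (hF₀ ▸ (hh₁supp.sub hh₂supp).comp_left (g := fun t : ℝ => t ^ 2) (by norm_num))
    (show Continuous fun p : ℝ × (ℝ × ℝ) => 2 * (h₁ p.2 - P h₂ p.1 p.2) * P divh₂u p.1 p.2 by
      fun_prop)
    (fun s x hx => by simp [hPdiv_supp s x hx])
    (fun s x => (((hasDerivAt_pushforwardDensity hu.differentiable_one hh₂.differentiable_one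
      hΦ hDΦs s x).const_sub (h₁ x)).pow 2).congr_deriv (by ring))
  simp only [P, divh₂u, pushforwardDensity_zero hΦ0 hDΦ0] at hmain
  exact hmain
end
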